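/- (Strongly-convex SGD under WGC) If f is μ-strongly convex, L-smooth, minimized at w*, and its stochastic gradients are unbiased and satisfy the weak growth condition E_z‖∇f(w,z)‖² ≤ 2ρL[f(w) − f(w*)], then constant step-size SGD with η = 1/(ρL) satisfies E‖w_{k+1} − w*‖² ≤ (1 − μ/(ρL))^{k+1} ‖w₀ − w*‖². -/

import Mathlib

/-!
Averaged over the noise `z`, one SGD step from `w` gives
`‖w - w*‖² - 2η⟪w - w*, ∇f w⟫ + η² E_z‖∇f(w, z)‖²`. Strong convexity between `w` and `w*`
bounds the inner product below by `f w - f w* + μ/2 ‖w - w*‖²`, and the weak growth condition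
with `η = 1/(ρL)` bounds the last term by `2η (f w - f w*)`. The function values cancel, so the
expected squared distance contracts by the factor `1 - μη` at every step; the tower property
over the i.i.d. noise iterates this.
-/

open scoped RealInnerProductSpace
open Finset

/-- Expectation over the first `k` steps of uniform i.i.d. noise in `Fin n`. -/
noncomputable def ExpN (n k : ℕ) (hn : 0 < n) (h : (ℕ → Fin n) → ℝ) : ℝ :=
  (∑ σ : Fin k → Fin n, h (fun i => if hi : i < k then σ ⟨i, hi⟩ else ⟨0, hn⟩)) / (n : ℝ) ^ k

theorem le_pow_mul_of_le_mul {u : ℕ → ℝ} {c : ℝ} (hu : ∀ k, 0 ≤ u k)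
    (h : ∀ k, u (k + 1) ≤ c * u k) (k : ℕ) : u k ≤ c ^ k * u 0 := by
  rcases le_or_gt 0 c with hc | hc
  · exact le_geom hc k fun i _ => h i
  -- For `c < 0`, `0 ≤ u 1 ≤ c * u 0` forces `u 0 = 0`, and then every later `u k` vanishes.
  have hu0 : u 0 = 0 := le_antisymm (nonpos_of_mul_nonneg_right ((hu 1).trans (h 0)) hc) (hu 0)
  cases k with
  | zero => simp
  | succ k => simpa [hu0] using (h k).trans (mul_nonpos_of_nonpos_of_nonneg hc.le (hu k))

theorem iterate_eq_of_forall_lt_eq {α β : Type*} {W : (ℕ → α) → ℕ → β} {F : β → α → β}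
    (hW0 : ∀ ω ω', W ω 0 = W ω' 0) (hWs : ∀ ω k, W ω (k + 1) = F (W ω k) (ω k)) :
    ∀ {k : ℕ} {ω ω' : ℕ → α}, (∀ i < k, ω i = ω' i) → W ω k = W ω' k
  | 0, ω, ω', _ => hW0 ω ω'
  | k + 1, ω, ω', h => by
    rw [hWs, hWs, iterate_eq_of_forall_lt_eq hW0 hWs fun i hi => h i (by omega), h k (by omega)]

theorem dite_lt_snoc_eq_update {α : Type*} (a : α) {k : ℕ} (τ : Fin k → α) (z : α) :
    (fun i => if hi : i < k + 1 then (Fin.snoc τ z : Fin (k + 1) → α) ⟨i, hi⟩ else a) =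
      Function.update (fun i => if hi : i < k then τ ⟨i, hi⟩ else a) k z := by
  funext i
  rcases lt_trichotomy i k with hik | rfl | hki
  · rw [dif_pos (Nat.lt_succ_of_lt hik), Function.update_of_ne hik.ne, dif_pos hik]
    exact Fin.snoc_castSucc (α := fun _ => α) z τ ⟨i, hik⟩
  · rw [dif_pos (Nat.lt_succ_self i), Function.update_self]
    exact Fin.snoc_last (α := fun _ => α) z τ
  · simp [show ¬ i < k + 1 by omega, show ¬ i < k by omega, Function.update_of_ne hki.ne']

section ExpN

variable {n : ℕ} (hn : 0 < n)

theorem ExpN_zero (h : (ℕ → Fin n) → ℝ) : ExpN n 0 hn h = h fun _ => ⟨0, hn⟩ := by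
  simp [ExpN]

theorem ExpN_nonneg {k : ℕ} {h : (ℕ → Fin n) → ℝ} (h0 : ∀ ω, 0 ≤ h ω) : 0 ≤ ExpN n k hn h :=
  div_nonneg (sum_nonneg fun _ _ => h0 _) (by positivity)

theorem ExpN_mono {k : ℕ} {h g : (ℕ → Fin n) → ℝ} (hg : ∀ ω, h ω ≤ g ω) :
    ExpN n k hn h ≤ ExpN n k hn g :=
  div_le_div_of_nonneg_right (sum_le_sum fun _ _ => hg _) (by positivity)

theorem ExpN_const_mul (k : ℕ) (c : ℝ) (h : (ℕ → Fin n) → ℝ) :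
    ExpN n k hn (fun ω => c * h ω) = c * ExpN n k hn h := by
  simp only [ExpN, ← mul_sum, mul_div_assoc]

/-- Tower property for the noise drawn at step `k`. -/
theorem ExpN_succ (k : ℕ) (h : (ℕ → Fin n) → ℝ) :
    ExpN n (k + 1) hn h =
      ExpN n k hn fun ω => (1 / (n : ℝ)) * ∑ z, h (Function.update ω k z) := by
  have hn' : (n : ℝ) ≠ 0 := by positivity
  simp only [ExpN, ← (Fin.snocEquiv fun _ => Fin n).sum_comp, Fintype.sum_prod_type,
    Fin.snocEquiv_apply, dite_lt_snoc_eq_update, ← mul_sum]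
  rw [sum_comm, pow_succ]
  field_simp

end ExpN

section SGDStep

variable {E : Type*} [NormedAddCommGroup E] [InnerProductSpace ℝ E] {n : ℕ}

theorem mean_norm_sub_smul_sq (hn : 0 < n) (v : E) (η : ℝ) (G : Fin n → E) :
    (1 / (n : ℝ)) * ∑ z, ‖v - η • G z‖ ^ 2 =
      ‖v‖ ^ 2 - 2 * η * ⟪v, (1 / (n : ℝ)) • ∑ z, G z⟫ +
        η ^ 2 * ((1 / (n : ℝ)) * ∑ z, ‖G z‖ ^ 2) := by
  have hn' : (n : ℝ) ≠ 0 := by positivity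
  simp only [norm_sub_sq_real, inner_smul_right, norm_smul, mul_pow, Real.norm_eq_abs, sq_abs,
    inner_sum, sum_add_distrib, sum_sub_distrib, sum_const, card_univ, Fintype.card_fin,
    nsmul_eq_mul, ← mul_sum]
  field_simp

theorem sgd_step_contraction (hn : 0 < n) {f : E → ℝ} {g w wstar : E} {G : Fin n → E}
    {ρ L μ : ℝ} (hρL : 0 < ρ * L)
    (hsc : f wstar ≥ f w + ⟪g, wstar - w⟫ + (μ / 2) * ‖wstar - w‖ ^ 2)
    (hunbiased : (1 / (n : ℝ)) • ∑ z, G z = g)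
    (hwgc : (1 / (n : ℝ)) * ∑ z, ‖G z‖ ^ 2 ≤ 2 * ρ * L * (f w - f wstar)) :
    (1 / (n : ℝ)) * ∑ z, ‖w - (1 / (ρ * L)) • G z - wstar‖ ^ 2 ≤
      (1 - μ / (ρ * L)) * ‖w - wstar‖ ^ 2 := by
  have hinner : f w - f wstar + μ / 2 * ‖w - wstar‖ ^ 2 ≤ ⟪w - wstar, g⟫ := by
    rw [← neg_sub w wstar, inner_neg_right, norm_neg, real_inner_comm] at hsc
    linarith
  have hnoise : (1 / (ρ * L)) ^ 2 * ((1 / (n : ℝ)) * ∑ z, ‖G z‖ ^ 2) ≤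
      2 * (1 / (ρ * L)) * (f w - f wstar) := by
    calc _ ≤ (1 / (ρ * L)) ^ 2 * (2 * ρ * L * (f w - f wstar)) := by gcongr
      _ = _ := by field_simp
  simp only [sub_right_comm w _ wstar, mean_norm_sub_smul_sq hn, hunbiased]
  have := mul_le_mul_of_nonneg_left hinner (by positivity : (0 : ℝ) ≤ 2 * (1 / (ρ * L)))
  linear_combination this + hnoise

end SGDStep

theorem sgd_strongly_convex_wgc_general
    (d n : ℕ) (hn : 0 < n)
    (f : EuclideanSpace ℝ (Fin d) → ℝ)
    (f' : EuclideanSpace ℝ (Fin d) → EuclideanSpace ℝ (Fin d))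
    (G : EuclideanSpace ℝ (Fin d) → Fin n → EuclideanSpace ℝ (Fin d))
    (ρ L μ η : ℝ) (w0 wstar : EuclideanSpace ℝ (Fin d))
    (W : (ℕ → Fin n) → ℕ → EuclideanSpace ℝ (Fin d))
    (hL : 0 < L) (hρ : 1 ≤ ρ)
    (hsc : ∀ v u, f v ≥ f u + ⟪f' u, v - u⟫ + (μ / 2) * ‖v - u‖ ^ 2)
    (hunbiased : ∀ v, (1 / (n : ℝ)) • ∑ z, G v z = f' v)
    (hwgc : ∀ v, (1 / (n : ℝ)) * ∑ z, ‖G v z‖ ^ 2 ≤ 2 * ρ * L * (f v - f wstar))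
    (hη : η = 1 / (ρ * L))
    (hW0 : ∀ ω, W ω 0 = w0)
    (hWs : ∀ ω k, W ω (k + 1) = W ω k - η • G (W ω k) (ω k)) :
    ∀ k : ℕ, ExpN n (k + 1) hn (fun ω => ‖W ω (k + 1) - wstar‖ ^ 2)
      ≤ (1 - μ / (ρ * L)) ^ (k + 1) * ‖w0 - wstar‖ ^ 2 := by
  have hρL : 0 < ρ * L := mul_pos (by linarith) hL
  set e : ℕ → ℝ := fun k => ExpN n k hn fun ω => ‖W ω k - wstar‖ ^ 2
  have hstep : ∀ k, e (k + 1) ≤ (1 - μ / (ρ * L)) * e k := by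
    intro k
    have hupdate : ∀ ω z, W (Function.update ω k z) (k + 1) = W ω k - η • G (W ω k) z := by
      intro ω z
      rw [hWs, Function.update_self, iterate_eq_of_forall_lt_eq (F := fun w z => w - η • G w z)
        (fun _ _ => by rw [hW0, hW0]) hWs (ω' := ω) fun i hi => Function.update_of_ne hi.ne ..]
    calc e (k + 1)
        = ExpN n k hn fun ω => (1 / (n : ℝ)) * ∑ z, ‖W ω k - η • G (W ω k) z - wstar‖ ^ 2 := by
          simp only [e, ExpN_succ, hupdate]
      _ ≤ ExpN n k hn fun ω => (1 - μ / (ρ * L)) * ‖W ω k - wstar‖ ^ 2 :=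
          ExpN_mono hn fun _ => hη ▸ sgd_step_contraction hn hρL (hsc _ _) (hunbiased _) (hwgc _)
      _ = (1 - μ / (ρ * L)) * e k := ExpN_const_mul ..
  intro k
  have he0 : e 0 = ‖w0 - wstar‖ ^ 2 := by simp only [e, ExpN_zero, hW0]
  exact he0 ▸
    le_pow_mul_of_le_mul (u := e) (fun k => ExpN_nonneg hn fun _ => sq_nonneg _) hstep (k + 1)

/-- Strongly-convex SGD under the weak growth condition:
with `η = 1/(ρL)`, `E‖w_{k+1} − w*‖² ≤ (1 − μ/(ρL))^{k+1} ‖w₀ − w*‖²`. -/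
theorem sgd_strongly_convex_wgc
    (d n : ℕ) (hn : 0 < n)
    (f : EuclideanSpace ℝ (Fin d) → ℝ)
    (f' : EuclideanSpace ℝ (Fin d) → EuclideanSpace ℝ (Fin d))
    (G : EuclideanSpace ℝ (Fin d) → Fin n → EuclideanSpace ℝ (Fin d))
    (ρ L μ η : ℝ) (w0 wstar : EuclideanSpace ℝ (Fin d))
    (W : (ℕ → Fin n) → ℕ → EuclideanSpace ℝ (Fin d))
    (hL : 0 < L) (hρ : 1 ≤ ρ) (hμ : 0 < μ)
    (hgrad : ∀ v, HasGradientAt f (f' v) v)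
    (hlip : LipschitzWith (Real.toNNReal L) f')
    (hsc : ∀ v u, f v ≥ f u + ⟪f' u, v - u⟫ + (μ / 2) * ‖v - u‖ ^ 2)
    (hmin : ∀ v, f wstar ≤ f v)
    (hunbiased : ∀ v, (1 / (n : ℝ)) • ∑ z, G v z = f' v)
    (hwgc : ∀ v, (1 / (n : ℝ)) * ∑ z, ‖G v z‖ ^ 2 ≤ 2 * ρ * L * (f v - f wstar))
    (hη : η = 1 / (ρ * L))
    (hW0 : ∀ ω, W ω 0 = w0)
    (hWs : ∀ ω k, W ω (k + 1) = W ω k - η • G (W ω k) (ω k)) :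
    ∀ k : ℕ, ExpN n (k + 1) hn (fun ω => ‖W ω (k + 1) - wstar‖ ^ 2)
      ≤ (1 - μ / (ρ * L)) ^ (k + 1) * ‖w0 - wstar‖ ^ 2 :=
  sgd_strongly_convex_wgc_general d n hn f f' G ρ L μ η w0 wstar W hL hρ hsc hunbiased hwgc hη hW0
    hWs
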